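/- arXiv:math/0009149 — 2 statements merged into one kernel-verified Lean document; each statement's English description precedes it below -/
import Mathlib

section
/- Let f : ℂ → ℂ be holomorphic and s the horosphere extension section s(w,t) = (f(w)/t)(E₁ − R₂) + f'(w)E₃ − (t f''(w)/2)(E₁ + R₂). Then ds = −(t² f'''(w)/2)(E₁ + R₂)(ω¹ + iω²), and its pointwise norm satisfies ‖ds(w,t)‖ = |f'''(w)| t², i.e., ‖ds‖ = |f'''(w)| e^{−2d} where d = −log t is the distance from the horosphere t = 1. -/
noncomputable section

/-- Frame sections of the flat bundle `E = ℍ³ × sl₂ℂ` (flat trivialization). -/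
def E1m (w : ℂ) (t : ℝ) : Matrix (Fin 2) (Fin 2) ℂ :=
  !![w / (2 * (t : ℂ)), (t : ℂ) / 2 - w ^ 2 / (2 * (t : ℂ));
     1 / (2 * (t : ℂ)), -(w / (2 * (t : ℂ)))]

def E2m (w : ℂ) (t : ℝ) : Matrix (Fin 2) (Fin 2) ℂ :=
  Complex.I • !![-(w / (2 * (t : ℂ))), (t : ℂ) / 2 + w ^ 2 / (2 * (t : ℂ));
                 -(1 / (2 * (t : ℂ))), w / (2 * (t : ℂ))]

def R2m (w : ℂ) (t : ℝ) : Matrix (Fin 2) (Fin 2) ℂ := Complex.I • E2m w t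

/-- The flat derivative of a section of `E` in the direction `v`. -/
def flatDeriv (S : ℝ × ℝ × ℝ → Matrix (Fin 2) (Fin 2) ℂ) (p v : ℝ × ℝ × ℝ) :
    Matrix (Fin 2) (Fin 2) ℂ :=
  Matrix.of fun i j => fderiv ℝ (fun q => S q i j) p v

/-- An isometry of `ℍ³` taking the base point `(0,1)` to `(w,t)`. -/
def gmat (w : ℂ) (t : ℝ) : Matrix (Fin 2) (Fin 2) ℂ :=
  !![(Real.sqrt t : ℂ), w / (Real.sqrt t : ℂ); 0, 1 / (Real.sqrt t : ℂ)]

def gmatInv (w : ℂ) (t : ℝ) : Matrix (Fin 2) (Fin 2) ℂ :=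
  !![1 / (Real.sqrt t : ℂ), -(w / (Real.sqrt t : ℂ)); 0, (Real.sqrt t : ℂ)]

/-- The squared norm of `X ∈ sl₂ℂ` in the fiber metric
`⟨v,w⟩ₓ = ⟨v(x),w(x)⟩ + ⟨iv(x),iw(x)⟩` at the point `x = (w,t)` of `ℍ³`: translate to the
base point, where the norm of `!![a,b;c,-a]` is `4|a|² + 2|b|² + 2|c|²`. -/
def fiberNormSq (X : Matrix (Fin 2) (Fin 2) ℂ) (w : ℂ) (t : ℝ) : ℝ :=
  let Y := gmatInv w t * X * gmat w t
  4 * Complex.normSq (Y 0 0) + 2 * Complex.normSq (Y 0 1) + 2 * Complex.normSq (Y 1 0)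

/-!
In the flat trivialization the section is `S (x + iy)` with
`S = horosphereSection f = f • N + f' • H - (f''/2) • M`, where `N = !![0,1;0,0]`,
`H z = !![1/2,-z;0,-1/2]` and `M z = !![z,-z²;1,-z]`. Since `H' = -N` and `M' = 2 • H`,
everything but one term cancels in `S' = -(f'''/2) • M`, and since `S` is holomorphic its flat
derivative along `v` is `(v_x + i v_y) • S'`. The isometry `gmat w t` conjugates `M w` to
`!![0,0;t,0]`, so `c • M w` has squared norm `2|c|²t²` at `(w,t)`; summing over the orthonormal
frame `t∂ₓ, t∂_y, t∂_t` gives `|f'''|² t⁴`.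
-/

open Complex

theorem Differentiable.hasDerivAt_iteratedDeriv {E : Type*} [NormedAddCommGroup E]
    [NormedSpace ℂ E] [CompleteSpace E] {f : ℂ → E} (hf : Differentiable ℂ f) (n : ℕ) (z : ℂ) :
    HasDerivAt (iteratedDeriv n f) (iteratedDeriv (n + 1) f z) z := by
  rw [iteratedDeriv_succ]
  exact ((hf.contDiff (n := ⊤)).differentiable_iteratedDeriv n
    (WithTop.coe_lt_top _)).differentiableAt.hasDerivAt

def horosphereSection (f : ℂ → ℂ) (z : ℂ) : Matrix (Fin 2) (Fin 2) ℂ :=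
  f z • !![0, 1; 0, 0] + deriv f z • !![1 / 2, -z; 0, -(1 / 2)]
    - (iteratedDeriv 2 f z / 2) • !![z, -z ^ 2; 1, -z]

section MatrixDerivative

attribute [local instance] Matrix.normedAddCommGroup Matrix.normedSpace

theorem hasDerivAt_horosphereSection {f : ℂ → ℂ} (hf : Differentiable ℂ f) (z : ℂ) :
    HasDerivAt (horosphereSection f) (-(iteratedDeriv 3 f z / 2) • !![z, -z ^ 2; 1, -z]) z := by
  have hH : HasDerivAt (fun z : ℂ => !![1 / 2, -z; 0, -(1 / 2)]) (-!![0, 1; 0, 0]) z := by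
    refine hasDerivAt_pi.2 fun i => hasDerivAt_pi.2 fun j => ?_
    fin_cases i <;> fin_cases j <;> simp
    exacts [hasDerivAt_const _ _, (hasDerivAt_id' z).neg, hasDerivAt_const _ _, hasDerivAt_const _ _]
  have hM : HasDerivAt (fun z : ℂ => !![z, -z ^ 2; 1, -z])
      ((2 : ℂ) • !![1 / 2, -z; 0, -(1 / 2)]) z := by
    refine hasDerivAt_pi.2 fun i => hasDerivAt_pi.2 fun j => ?_
    fin_cases i <;> fin_cases j <;> simp
    exacts [hasDerivAt_id' z, (hasDerivAt_pow 2 z).neg.congr_deriv (by simp), hasDerivAt_const _ _,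
      (hasDerivAt_id' z).neg]
  have h1 : HasDerivAt (deriv f) (iteratedDeriv 2 f z) z := by
    simpa using hf.hasDerivAt_iteratedDeriv 1 z
  have h := (((hf z).hasDerivAt.smul_const !![(0 : ℂ), 1; 0, 0]).add (h1.smul hH)).sub
    (((hf.hasDerivAt_iteratedDeriv 2 z).div_const 2).smul hM)
  refine h.congr_deriv ?_
  ext i j
  fin_cases i <;> fin_cases j <;> simp <;> ring

theorem hasFDerivAt_ofReal_add_ofReal_mul_I (p : ℝ × ℝ × ℝ) :
    HasFDerivAt (fun q : ℝ × ℝ × ℝ => (q.1 + q.2.1 * I : ℂ))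
      ((equivRealProdCLM.symm : ℝ × ℝ →L[ℝ] ℂ).comp
        ((ContinuousLinearMap.id ℝ ℝ).prodMap (ContinuousLinearMap.fst ℝ ℝ ℝ))) p := by
  convert ContinuousLinearMap.hasFDerivAt _ using 1
  ext q
  simp [equivRealProdCLM_symm_apply]

theorem flatDeriv_comp_ofReal_add_ofReal_mul_I {S : ℂ → Matrix (Fin 2) (Fin 2) ℂ}
    {S' : Matrix (Fin 2) (Fin 2) ℂ} {p : ℝ × ℝ × ℝ} (hS : HasDerivAt S S' (p.1 + p.2.1 * I))
    (v : ℝ × ℝ × ℝ) :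
    flatDeriv (fun q => S (q.1 + q.2.1 * I)) p v = (v.1 + v.2.1 * I : ℂ) • S' := by
  ext i j
  have hSij := (hasDerivAt_pi.1 (hasDerivAt_pi.1 hS i) j).comp_hasFDerivAt p
    (hasFDerivAt_ofReal_add_ofReal_mul_I p)
  simp only [flatDeriv, Matrix.of_apply, Matrix.smul_apply]
  rw [← Function.comp_def (fun z => S z i j), hSij.fderiv]
  simp [equivRealProdCLM_symm_apply, mul_comm]

end MatrixDerivative

theorem gmatInv_mul_mul_gmat (w : ℂ) {t : ℝ} (ht : 0 < t) :
    gmatInv w t * !![w, -w ^ 2; 1, -w] * gmat w t = !![0, 0; (t : ℂ), 0] := by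
  ext i j
  fin_cases i <;> fin_cases j <;> simp [gmat, gmatInv, Matrix.mul_apply]
  · left; ring
  · ring
  · exact_mod_cast Real.mul_self_sqrt ht.le
  · ring

theorem fiberNormSq_smul (c w : ℂ) {t : ℝ} (ht : 0 < t) :
    fiberNormSq (c • !![w, -w ^ 2; 1, -w]) w t = 2 * normSq c * t ^ 2 := by
  simp only [fiberNormSq, Matrix.mul_smul, Matrix.smul_mul, gmatInv_mul_mul_gmat w ht]
  simp [normSq_mul]
  ring

/-- For holomorphic `f`, the horosphere extension
`s = (f(w)/t)(E₁-R₂) + f'(w)E₃ - (t f''(w)/2)(E₁+R₂)` has flat derivative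
`ds = -(t² f'''(w)/2)(E₁+R₂)(ω¹ + iω²)` — i.e. on a tangent vector `v = (vx,vy,vt)` at
`(w,t)` it is `-(f'''(w)(vx + i vy)/2) • !![w,-w²;1,-w]` — and pointwise norm
`‖ds(w,t)‖ = |f'''(w)| t² = |f'''(w)| e^{-2d}` where `d = -log t` is the distance from the
horosphere `t = 1`. -/
theorem ds_of_horosphere_extension (f : ℂ → ℂ) (hf : Differentiable ℂ f) :
    let s : ℝ × ℝ × ℝ → Matrix (Fin 2) (Fin 2) ℂ := fun p =>
      let w : ℂ := p.1 + p.2.1 * Complex.I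
      f w • !![0, 1; 0, 0] + deriv f w • !![1 / 2, -w; 0, -(1 / 2)]
        - (iteratedDeriv 2 f w / 2) • !![w, -w ^ 2; 1, -w]
    ∀ x y t : ℝ, 0 < t →
      (∀ vx vy vt : ℝ,
        flatDeriv s (x, y, t) (vx, vy, vt)
          = (-(iteratedDeriv 3 f (x + y * Complex.I) * (vx + vy * Complex.I) / 2))
              • !![(x + y * Complex.I : ℂ), -(x + y * Complex.I : ℂ) ^ 2;
                   1, -(x + y * Complex.I : ℂ)])
      ∧ Real.sqrt (fiberNormSq (flatDeriv s (x, y, t) (t, 0, 0)) (x + y * Complex.I) t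
            + fiberNormSq (flatDeriv s (x, y, t) (0, t, 0)) (x + y * Complex.I) t
            + fiberNormSq (flatDeriv s (x, y, t) (0, 0, t)) (x + y * Complex.I) t)
          = ‖iteratedDeriv 3 f (x + y * Complex.I)‖ * t ^ 2
      ∧ ‖iteratedDeriv 3 f (x + y * Complex.I)‖ * t ^ 2
          = ‖iteratedDeriv 3 f (x + y * Complex.I)‖
              * Real.exp (-2 * (-Real.log t)) := by
  intro s x y t ht
  have hds (v : ℝ × ℝ × ℝ) : flatDeriv s (x, y, t) v
      = (-(iteratedDeriv 3 f (x + y * I) * (v.1 + v.2.1 * I) / 2))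
          • !![(x + y * I : ℂ), -(x + y * I : ℂ) ^ 2; 1, -(x + y * I : ℂ)] := by
    rw [show s = fun q => horosphereSection f (q.1 + q.2.1 * I) from rfl,
      flatDeriv_comp_ofReal_add_ofReal_mul_I (hasDerivAt_horosphereSection hf _) v, smul_smul]
    congr 1
    ring
  refine ⟨fun vx vy vt => hds (vx, vy, vt), ?_, ?_⟩
  · simp only [hds, fiberNormSq_smul _ _ ht]
    rw [← Real.sqrt_sq (by positivity : 0 ≤ ‖iteratedDeriv 3 f (x + y * I)‖ * t ^ 2)]
    congr 1
    simp [mul_pow, ← Complex.sq_norm, abs_of_pos ht]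
    ring
  · rw [show -2 * -Real.log t = Real.log t + Real.log t by ring, Real.exp_add, Real.exp_log ht, sq]
end
end

section
/- On the upper half space model of ℍ³ with the flat sl₂ℂ-bundle E, the sections E₁, E₂, E₃ (real lifts of the orthonormal frame) satisfy dE₁ = E₃ω¹ + R₃ω² − R₂ω³, dE₂ = −R₃ω¹ + E₃ω² + R₁ω³, and dE₃ = −(E₁ − R₂)ω¹ − (R₁ + E₂)ω², where d = Σᵢ ωⁱ ∧ (∇_{eᵢ} + ad(Eᵢ)). -/
noncomputable section

/-- The section `E₃` (value `e₃ = t ∂_t`, curl `0` at `(w, t)`). -/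
def E3m (w : ℂ) (_t : ℝ) : Matrix (Fin 2) (Fin 2) ℂ :=
  !![1 / 2, -w; 0, -(1 / 2)]

/-- `Rᵢ = i Eᵢ`. -/
def R1m (w : ℂ) (t : ℝ) : Matrix (Fin 2) (Fin 2) ℂ := Complex.I • E1m w t

def R3m (w : ℂ) (t : ℝ) : Matrix (Fin 2) (Fin 2) ℂ := Complex.I • E3m w t

/-!
In the flat trivialization every entry of `E₁`, `E₂`, `E₃` has the form
`a(w) + t b(w) + t⁻¹ c(w)` with `a, b, c` polynomials in `w = x + iy`. Since such an entry is
holomorphic in `w`, its derivative along `v = (vx, vy, vt)` is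
`(vx + i vy) (a' + t b' + t⁻¹ c') + vt (b - t⁻² c)`, and the structure equations become
polynomial identities in `x, y, t, t⁻¹` and `i`.
-/

open Complex Polynomial

section

variable {F : Type*} [NormedAddCommGroup F] [NormedSpace ℂ F]

theorem fderiv_laurent_apply {a b c : ℂ → F} {a' b' c' : F} {x y t : ℝ}
    (ha : HasDerivAt a a' (x + y * I)) (hb : HasDerivAt b b' (x + y * I))
    (hc : HasDerivAt c c' (x + y * I)) (ht : t ≠ 0) (vx vy vt : ℝ) :
    fderiv ℝ (fun q : ℝ × ℝ × ℝ => a (q.1 + q.2.1 * I) + q.2.2 • b (q.1 + q.2.1 * I)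
        + q.2.2⁻¹ • c (q.1 + q.2.1 * I)) (x, y, t) (vx, vy, vt)
      = (vx + vy * I) • (a' + t • b' + t⁻¹ • c')
        + vt • (b (x + y * I) - (t ^ 2)⁻¹ • c (x + y * I)) := by
  have hheight : HasFDerivAt (fun q : ℝ × ℝ × ℝ => q.2.2) _ (x, y, t) :=
    (hasFDerivAt_snd (𝕜 := ℝ) (p := ((x, y, t) : ℝ × ℝ × ℝ))).snd
  have hw : HasFDerivAt (fun q : ℝ × ℝ × ℝ => (q.1 : ℂ) + q.2.1 * I) _ (x, y, t) :=
    (ofRealCLM.hasFDerivAt.comp _ hasFDerivAt_fst).fun_add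
      ((ofRealCLM.hasFDerivAt.comp _
        (hasFDerivAt_snd (𝕜 := ℝ) (p := ((x, y, t) : ℝ × ℝ × ℝ))).fst).mul_const I)
  have hcomp : ∀ {f : ℂ → F} {f' : F}, HasDerivAt f f' (x + y * I) →
      HasFDerivAt (fun q : ℝ × ℝ × ℝ => f (q.1 + q.2.1 * I)) _ (x, y, t) :=
    fun hf => (hf.hasFDerivAt.restrictScalars ℝ).comp (x, y, t) hw
  have hinv : HasFDerivAt (fun q : ℝ × ℝ × ℝ => q.2.2⁻¹) _ (x, y, t) :=
    (hasDerivAt_inv ht).comp_hasFDerivAt (x, y, t) hheight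
  rw [(((hcomp ha).fun_add (hheight.fun_smul (hcomp hb))).fun_add (hinv.fun_smul (hcomp hc))).fderiv]
  simp only [add_apply, smul_apply, neg_apply, ContinuousLinearMap.comp_add, smul_add, neg_smul,
    ContinuousLinearMap.comp_apply, ContinuousLinearMap.coe_fst', ContinuousLinearMap.coe_snd',
    ContinuousLinearMap.coe_restrictScalars', ContinuousLinearMap.toSpanSingleton_apply,
    ContinuousLinearMap.smulRight_apply, ofRealCLM_apply, Complex.coe_smul, smul_eq_mul]
  module

end

def laurentSection (A B C : Matrix (Fin 2) (Fin 2) ℂ[X]) (q : ℝ × ℝ × ℝ) :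
    Matrix (Fin 2) (Fin 2) ℂ :=
  A.map (eval (q.1 + q.2.1 * I)) + q.2.2 • B.map (eval (q.1 + q.2.1 * I))
    + q.2.2⁻¹ • C.map (eval (q.1 + q.2.1 * I))

theorem flatDeriv_laurentSection (A B C : Matrix (Fin 2) (Fin 2) ℂ[X]) {t : ℝ} (ht : t ≠ 0)
    (x y vx vy vt : ℝ) :
    flatDeriv (laurentSection A B C) (x, y, t) (vx, vy, vt)
      = (vx + vy * I) • (A.map (eval (x + y * I) ∘ derivative)
          + t • B.map (eval (x + y * I) ∘ derivative)
          + t⁻¹ • C.map (eval (x + y * I) ∘ derivative))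
        + vt • (B.map (eval (x + y * I)) - (t ^ 2)⁻¹ • C.map (eval (x + y * I))) := by
  ext i j
  exact fderiv_laurent_apply (Polynomial.hasDerivAt _ _) (Polynomial.hasDerivAt _ _)
    (Polynomial.hasDerivAt _ _) ht vx vy vt

theorem E1m_eq_laurentSection :
    (fun q : ℝ × ℝ × ℝ => E1m (q.1 + q.2.1 * I) q.2.2)
      = laurentSection 0 ((1 / 2 : ℂ) • !![0, 1; 0, 0])
          ((1 / 2 : ℂ) • !![X, -X ^ 2; 1, -X]) := by
  ext q i j
  fin_cases i <;> fin_cases j <;> simp [laurentSection, E1m] <;> ring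

theorem E2m_eq_laurentSection :
    (fun q : ℝ × ℝ × ℝ => E2m (q.1 + q.2.1 * I) q.2.2)
      = laurentSection 0 ((I / 2) • !![0, 1; 0, 0]) ((I / 2) • !![-X, X ^ 2; -1, X]) := by
  ext q i j
  fin_cases i <;> fin_cases j <;> simp [laurentSection, E2m] <;> ring

theorem E3m_eq_laurentSection :
    (fun q : ℝ × ℝ × ℝ => E3m (q.1 + q.2.1 * I) q.2.2)
      = laurentSection ((1 / 2 : ℂ) • !![1, -2 * X; 0, -1]) 0 0 := by
  ext q i j
  fin_cases i <;> fin_cases j <;> simp [laurentSection, E3m]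

theorem flatDeriv_E1m (x y : ℝ) {t : ℝ} (ht : t ≠ 0) (vx vy vt : ℝ) :
    flatDeriv (fun q => E1m (q.1 + q.2.1 * I) q.2.2) (x, y, t) (vx, vy, vt)
        = (vx / t) • E3m (x + y * I) t + (vy / t) • R3m (x + y * I) t
          - (vt / t) • R2m (x + y * I) t := by
  have htc : (t : ℂ) ≠ 0 := by exact_mod_cast ht
  rw [E1m_eq_laurentSection, flatDeriv_laurentSection _ _ _ ht]
  ext i j
  fin_cases i <;> fin_cases j <;> simp [E3m, R3m, R2m, E2m] <;> field_simp <;> grind [I_sq]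

theorem flatDeriv_E2m (x y : ℝ) {t : ℝ} (ht : t ≠ 0) (vx vy vt : ℝ) :
    flatDeriv (fun q => E2m (q.1 + q.2.1 * I) q.2.2) (x, y, t) (vx, vy, vt)
        = -((vx / t) • R3m (x + y * I) t) + (vy / t) • E3m (x + y * I) t
          + (vt / t) • R1m (x + y * I) t := by
  have htc : (t : ℂ) ≠ 0 := by exact_mod_cast ht
  rw [E2m_eq_laurentSection, flatDeriv_laurentSection _ _ _ ht]
  ext i j
  fin_cases i <;> fin_cases j <;> simp [E3m, R3m, R1m, E1m] <;> field_simp <;> grind [I_sq]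

theorem flatDeriv_E3m (x y : ℝ) {t : ℝ} (ht : t ≠ 0) (vx vy vt : ℝ) :
    flatDeriv (fun q => E3m (q.1 + q.2.1 * I) q.2.2) (x, y, t) (vx, vy, vt)
        = -((vx / t) • (E1m (x + y * I) t - R2m (x + y * I) t))
          - (vy / t) • (R1m (x + y * I) t + E2m (x + y * I) t) := by
  have htc : (t : ℂ) ≠ 0 := by exact_mod_cast ht
  rw [E3m_eq_laurentSection, flatDeriv_laurentSection _ _ _ ht]
  ext i j
  fin_cases i <;> fin_cases j <;> simp [E1m, E2m, R1m, R2m] <;> field_simp <;> grind [I_sq]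

/-- Here `ωⁱ(v) = vᵢ / t` for a tangent vector `v = (vx, vy, vt)`. -/
theorem flatDeriv_frame_sections (x y t vx vy vt : ℝ) (ht : 0 < t) :
    flatDeriv (fun q => E1m (q.1 + q.2.1 * Complex.I) q.2.2) (x, y, t) (vx, vy, vt)
        = (vx / t) • E3m (x + y * Complex.I) t + (vy / t) • R3m (x + y * Complex.I) t
          - (vt / t) • R2m (x + y * Complex.I) t
    ∧ flatDeriv (fun q => E2m (q.1 + q.2.1 * Complex.I) q.2.2) (x, y, t) (vx, vy, vt)
        = -((vx / t) • R3m (x + y * Complex.I) t) + (vy / t) • E3m (x + y * Complex.I) t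
          + (vt / t) • R1m (x + y * Complex.I) t
    ∧ flatDeriv (fun q => E3m (q.1 + q.2.1 * Complex.I) q.2.2) (x, y, t) (vx, vy, vt)
        = -((vx / t) • (E1m (x + y * Complex.I) t - R2m (x + y * Complex.I) t))
          - (vy / t) • (R1m (x + y * Complex.I) t + E2m (x + y * Complex.I) t) := by
  exact ⟨flatDeriv_E1m x y ht.ne' vx vy vt, flatDeriv_E2m x y ht.ne' vx vy vt,
    flatDeriv_E3m x y ht.ne' vx vy vt⟩

end
end
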